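/- There is no triple of C² functions U₁, U₂, U₃ : ℝ³ → ℝ with ∂₁U₁ = 0, ∂₂U₂ = 0, ∂₃U₃ = 0 such that x₁x₂x₃ - ∂₁²(U₂ - U₃) = -∂₂²(U₃ - U₁) = -∂₃²(U₁ - U₂) holds identically on ℝ³. -/

import Mathlib

/-!
Adding up the first identity gives
`x₁x₂x₃ = ∂₁²U₂ - ∂₁²U₃ + ∂₂²U₁ - ∂₂²U₃`, and each term `∂ⱼ²Uᵢ` on the right is independent of `xᵢ`,
hence periodic under the unit shift `eᵢ`. The third mixed forward difference
`Δ_{e₁} Δ_{e₂} Δ_{e₃}` annihilates every function that is periodic along one of `e₁, e₂, e₃`,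
so it kills the right-hand side, while it maps `x₁x₂x₃` to the constant `1`.
-/

open Function fwdDiff

noncomputable def pd (i : Fin 3) (f : (Fin 3 → ℝ) → ℝ) : (Fin 3 → ℝ) → ℝ :=
  fun x => fderiv ℝ f x (Pi.single i 1)

section FiniteDifferences

variable {M G : Type*} [AddCommMonoid M] [AddCommGroup G]

lemma fwdDiff_sub (h : M) (f g : M → G) : Δ_[h] (f - g) = Δ_[h] f - Δ_[h] g :=
  funext fun _ => sub_sub_sub_comm ..

lemma fwdDiff_zero (h : M) : Δ_[h] (0 : M → G) = 0 :=
  funext fun _ => sub_self 0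

lemma fwdDiff_eq_zero_of_periodic {f : M → G} {h : M} (hf : Periodic f h) : Δ_[h] f = 0 :=
  funext fun x => sub_eq_zero.2 (hf x)

lemma Function.Periodic.fwdDiff {f : M → G} {c : M} (hf : Periodic f c) (h : M) :
    Periodic (Δ_[h] f) c := fun x => by
  simp only [_root_.fwdDiff, add_right_comm x c h, hf (x + h), hf x]

lemma fwdDiff_fwdDiff_fwdDiff_eq_zero {f : M → G} {a b c : M}
    (hf : Periodic f a ∨ Periodic f b ∨ Periodic f c) : Δ_[a] (Δ_[b] (Δ_[c] f)) = 0 := by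
  rcases hf with ha | hb | hc
  · exact fwdDiff_eq_zero_of_periodic ((ha.fwdDiff c).fwdDiff b)
  · rw [fwdDiff_eq_zero_of_periodic (hb.fwdDiff c), fwdDiff_zero]
  · rw [fwdDiff_eq_zero_of_periodic hc, fwdDiff_zero, fwdDiff_zero]

end FiniteDifferences

section Derivatives

variable {E F : Type*} [NormedAddCommGroup E] [NormedSpace ℝ E]
  [NormedAddCommGroup F] [NormedSpace ℝ F]

lemma Function.Periodic.fderiv {f : E → F} {c : E} (hf : Periodic f c) :
    Periodic (fderiv ℝ f) c := fun x => by
  rw [← fderiv_comp_add_right, hf.funext]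

lemma periodic_of_fderiv_apply_eq_zero {f : E → F} (hf : Differentiable ℝ f) {v : E}
    (hv : ∀ x, fderiv ℝ f x v = 0) : Periodic f v := fun x => by
  have hline : ∀ t : ℝ, HasDerivAt (fun s : ℝ => f (x + s • v)) 0 t := fun t => by
    have hpath : HasDerivAt (fun s : ℝ => x + s • v) v t := by
      simpa using ((hasDerivAt_id t).smul_const v).const_add x
    simpa [hv, comp_def] using (hf _).hasFDerivAt.comp_hasDerivAt t hpath
  simpa using is_const_of_deriv_eq_zero (fun t => (hline t).differentiableAt)
    (fun t => (hline t).deriv) 1 0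

end Derivatives

lemma Function.Periodic.pd {f : (Fin 3 → ℝ) → ℝ} {c : Fin 3 → ℝ} (hf : Periodic f c)
    (j : Fin 3) : Periodic (pd j f) c := fun x =>
  congrArg (· (Pi.single j 1)) (hf.fderiv x)

lemma ContDiff.differentiable_pd {f : (Fin 3 → ℝ) → ℝ} (hf : ContDiff ℝ 2 f) (j : Fin 3) :
    Differentiable ℝ (pd j f) :=
  ((hf.fderiv_right (by norm_num)).clm_apply contDiff_const).differentiable one_ne_zero

lemma pd_sub {f g : (Fin 3 → ℝ) → ℝ} (hf : Differentiable ℝ f) (hg : Differentiable ℝ g)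
    (j : Fin 3) : pd j (f - g) = pd j f - pd j g :=
  funext fun x => by simp [pd, fderiv_sub (hf x) (hg x)]

lemma pd_pd_sub {f g : (Fin 3 → ℝ) → ℝ} (hf : ContDiff ℝ 2 f) (hg : ContDiff ℝ 2 g)
    (j : Fin 3) : pd j (pd j (f - g)) = pd j (pd j f) - pd j (pd j g) := by
  rw [pd_sub (hf.differentiable two_ne_zero) (hg.differentiable two_ne_zero),
    pd_sub (hf.differentiable_pd j) (hg.differentiable_pd j)]

lemma fwdDiff_fwdDiff_fwdDiff_coord_mul_coord_mul_coord :
    Δ_[Pi.single 0 1] (Δ_[Pi.single 1 1] (Δ_[Pi.single 2 1]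
      (fun x : Fin 3 → ℝ => x 0 * x 1 * x 2))) 0 = 1 := by
  simp [_root_.fwdDiff]

theorem stmt15 :
    ¬ ∃ U : Fin 3 → (Fin 3 → ℝ) → ℝ,
      (∀ i, ContDiff ℝ 2 (U i)) ∧
      (∀ i, ∀ x, pd i (U i) x = 0) ∧
      (∀ x : Fin 3 → ℝ,
        x 0 * x 1 * x 2 - pd 0 (pd 0 (fun y => U 1 y - U 2 y)) x
          = -(pd 1 (pd 1 (fun y => U 2 y - U 0 y)) x) ∧
        -(pd 1 (pd 1 (fun y => U 2 y - U 0 y)) x)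
          = -(pd 2 (pd 2 (fun y => U 0 y - U 1 y)) x)) := by
  rintro ⟨U, hC, hP, hEq⟩
  have hper (i j : Fin 3) : Periodic (pd j (pd j (U i))) (Pi.single i 1) :=
    ((periodic_of_fderiv_apply_eq_zero ((hC i).differentiable two_ne_zero) (hP i)).pd j).pd j
  have hsplit : (fun x : Fin 3 → ℝ => x 0 * x 1 * x 2) =
      pd 0 (pd 0 (U 1)) - pd 0 (pd 0 (U 2)) + pd 1 (pd 1 (U 0)) - pd 1 (pd 1 (U 2)) := by
    funext x
    have h := (hEq x).1
    change x 0 * x 1 * x 2 - pd 0 (pd 0 (U 1 - U 2)) x = -pd 1 (pd 1 (U 2 - U 0)) x at h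
    rw [pd_pd_sub (hC 1) (hC 2), pd_pd_sub (hC 2) (hC 0)] at h
    simp only [Pi.add_apply, Pi.sub_apply] at h ⊢
    linarith
  have hcube := fwdDiff_fwdDiff_fwdDiff_coord_mul_coord_mul_coord
  rw [hsplit] at hcube
  simp only [fwdDiff_add, fwdDiff_sub, fwdDiff_fwdDiff_fwdDiff_eq_zero (Or.inl (hper 0 1)),
    fwdDiff_fwdDiff_fwdDiff_eq_zero (Or.inr (Or.inl (hper 1 0))),
    fwdDiff_fwdDiff_fwdDiff_eq_zero (Or.inr (Or.inr (hper 2 0))),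
    fwdDiff_fwdDiff_fwdDiff_eq_zero (Or.inr (Or.inr (hper 2 1)))] at hcube
  simp at hcube
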